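/- Let k ∈ ℝ, R ∈ ℂ, d ∈ ℝ, a = (0, d, 0) ∈ ℝ³, let σ : ℝ³ → ℝ³ be the reflection σ(y₁, y₂, y₃) = (y₁, −y₂, y₃) across the plane {x₂ = 0}, and define G_h(x, y) = G(x, y) + R · G(x, σ(y)). Let p, q ∈ ℝ³ and M ∈ ℕ with p + i·a ≠ q + j·a and p + i·a ≠ σ(q + j·a) for all i, j ∈ Fin M. Then the kernel matrix with entries G_h(p + i·a, q + j·a) splits into a Toeplitz part and a Hankel part: there exist functions t : ℤ → ℂ and h : ℕ → ℂ such that G_h(p + i·a, q + j·a) = t((i : ℤ) − j) + R · h((i : ℕ) + j) for all i, j ∈ Fin M. -/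

import Mathlib

/-- The free-space Helmholtz Green's function on ℝ³:
`G(x, y) = exp(i k ‖x − y‖) / (4π ‖x − y‖)`, meaningful for `x ≠ y`. -/
noncomputable def helmholtzG (k : ℝ) (x y : EuclideanSpace ℝ (Fin 3)) : ℂ :=
  Complex.exp (Complex.I * (k : ℂ) * (‖x - y‖ : ℂ)) /
    (4 * (Real.pi : ℂ) * (‖x - y‖ : ℂ))

/-- Reflection `σ(y₁, y₂, y₃) = (y₁, −y₂, y₃)` across the plane `{x₂ = 0}`. -/
noncomputable def mirrorY (y : EuclideanSpace ℝ (Fin 3)) : EuclideanSpace ℝ (Fin 3) :=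
  WithLp.toLp 2 (fun i : Fin 3 => if i = 1 then -(y i) else y i)

/-- The translation vector `a = (0, d, 0)`. -/
noncomputable def transY (d : ℝ) : EuclideanSpace ℝ (Fin 3) :=
  WithLp.toLp 2 (fun i : Fin 3 => if i = 1 then d else 0)

/-- The half-space Green's function `G_h(x, y) = G(x, y) + R·G(x, σ(y))` with
symmetry plane `{x₂ = 0}` and reflection coefficient `R`. -/
noncomputable def helmholtzGhY (k : ℝ) (R : ℂ) (x y : EuclideanSpace ℝ (Fin 3)) : ℂ :=
  helmholtzG k x y + R * helmholtzG k x (mirrorY y)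

/-!
`G(x, y)` depends only on `x − y`. Shifting both points along `a` changes `x − y` by `(i − j)·a`,
while the reflection `σ` reverses `a`, so `x − σ(y)` changes by `(i + j)·a`.
-/

section LatticeDifferences

variable {A : Type*} [AddCommGroup A]

theorem add_nsmul_sub_add_nsmul (p q a : A) (i j : ℕ) :
    (p + i • a) - (q + j • a) = p - q + ((i : ℤ) - j) • a := by
  rw [sub_smul, natCast_zsmul, natCast_zsmul]
  abel

theorem add_nsmul_sub_sub_nsmul (p q a : A) (i j : ℕ) :
    (p + i • a) - (q - j • a) = p - q + (i + j) • a := by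
  rw [add_smul]
  abel

end LatticeDifferences

theorem helmholtzG_eq_sub (k : ℝ) (x y : EuclideanSpace ℝ (Fin 3)) :
    helmholtzG k x y = helmholtzG k (x - y) 0 := by
  rw [helmholtzG, helmholtzG, sub_zero]

theorem mirrorY_add_nsmul_transY (y : EuclideanSpace ℝ (Fin 3)) (d : ℝ) (n : ℕ) :
    mirrorY (y + n • transY d) = mirrorY y - n • transY d := by
  ext i
  fin_cases i <;> simp [mirrorY, transY, sub_eq_add_neg, add_comm]

theorem halfspace_kernel_splits_toeplitz_hankel_general (k : ℝ) (R : ℂ) (d : ℝ)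
    (p q : EuclideanSpace ℝ (Fin 3)) (M : ℕ) :
    ∃ (t : ℤ → ℂ) (h : ℕ → ℂ),
      ∀ i j : Fin M,
        helmholtzGhY k R (p + (i : ℕ) • transY d) (q + (j : ℕ) • transY d) =
          t ((i : ℤ) - (j : ℤ)) + R * h ((i : ℕ) + (j : ℕ)) := by
  refine ⟨fun n => helmholtzG k (p - q + n • transY d) 0,
    fun m => helmholtzG k (p - mirrorY q + m • transY d) 0, fun i j => ?_⟩
  rw [helmholtzGhY, mirrorY_add_nsmul_transY, helmholtzG_eq_sub k _ (q + _),
    helmholtzG_eq_sub k _ (mirrorY q - _), add_nsmul_sub_add_nsmul, add_nsmul_sub_sub_nsmul]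

/-- For a periodicity direction `a = (0, d, 0)` perpendicular to the symmetry
plane `{x₂ = 0}`, the half-space kernel matrix splits into a Toeplitz part and
a Hankel part:
`G_h(p + i·a, q + j·a) = t(i − j) + R·h(i + j)`. -/
theorem halfspace_kernel_splits_toeplitz_hankel (k : ℝ) (R : ℂ) (d : ℝ)
    (p q : EuclideanSpace ℝ (Fin 3)) (M : ℕ)
    (hsep : ∀ i j : Fin M, p + (i : ℕ) • transY d ≠ q + (j : ℕ) • transY d)
    (hsep' : ∀ i j : Fin M,
      p + (i : ℕ) • transY d ≠ mirrorY (q + (j : ℕ) • transY d)) :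
    ∃ (t : ℤ → ℂ) (h : ℕ → ℂ),
      ∀ i j : Fin M,
        helmholtzGhY k R (p + (i : ℕ) • transY d) (q + (j : ℕ) • transY d) =
          t ((i : ℤ) - (j : ℤ)) + R * h ((i : ℕ) + (j : ℕ)) :=
  halfspace_kernel_splits_toeplitz_hankel_general k R d p q M
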